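/- arXiv:1602.06796 — 2 statements merged into one kernel-verified Lean document; each statement's English description precedes it below -/
import Mathlib

section
/- The subgroups of the dihedral group D₁₂ of order 12 (DihedralGroup 6) fall into exactly 10 conjugacy classes: each of the 9 subgroups generated by reflections together with a fixed rotation subgroup splits into a conjugacy class of size 3 with its two conjugates, while every other subgroup is normal; in particular the number of subgroups of D₁₂ up to conjugacy is 10. -/
open Pointwise

/-!
A subgroup of a finite group is the same thing as a `Bool`-valued membership table closed under
products and inverses, and conjugation and normality are finite conditions on such tables. For
`D₁₂` there are only `2 ^ 12` tables, so the classification is a finite computation: there are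
seven normal subgroups and nine non-normal ones, each of the form `⟨sr a, r b⟩` and with three
conjugates, hence ten conjugacy classes.
-/

namespace MulAction

variable {M α β : Type*} [Group M] [MulAction M α] [MulAction M β]

instance [Fintype M] [DecidableEq α] (x : α) : Fintype (orbit M x) :=
  Set.fintypeRange _

instance [Fintype M] [DecidableEq α] : DecidableRel (orbitRel M α) :=
  fun x y => decidable_of_iff (∃ g : M, g • y = x) mem_orbit_iff.symm

theorem image_orbit_of_map_smul (e : α → β) (he : ∀ (g : M) x, e (g • x) = g • e x) (x : α) :
    e '' orbit M x = orbit M (e x) := by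
  simp only [orbit, ← Set.range_comp, Function.comp_def, he]

theorem natCard_orbit_congr (e : α ≃ β) (he : ∀ (g : M) x, e (g • x) = g • e x) (x : α) :
    Nat.card (orbit M x) = Nat.card (orbit M (e x)) := by
  rw [← image_orbit_of_map_smul e he, Nat.card_image_of_injective e.injective]

def orbitRelQuotientCongr (e : α ≃ β) (he : ∀ (g : M) x, e (g • x) = g • e x) :
    orbitRel.Quotient M α ≃ orbitRel.Quotient M β :=
  Quotient.congr e fun x y => by
    change x ∈ orbit M y ↔ e x ∈ orbit M (e y)
    rw [← image_orbit_of_map_smul e he, e.injective.mem_set_image]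

end MulAction

abbrev BoolSubgroup (G : Type*) [Group G] : Type _ :=
  {f : G → Bool // f 1 ∧ (∀ x y, f x → f y → f (x * y)) ∧ ∀ x, f x → f x⁻¹}

namespace BoolSubgroup

variable {G : Type*} [Group G]

def IsNormal (f : BoolSubgroup G) : Prop :=
  ∀ g x, f.1 x → f.1 (g * x * g⁻¹)

instance [Fintype G] : DecidablePred (IsNormal (G := G)) :=
  fun f => inferInstanceAs (Decidable (∀ g x, f.1 x → f.1 (g * x * g⁻¹)))

instance : SMul (ConjAct G) (BoolSubgroup G) where
  smul c f := ⟨fun x => f.1 ((ConjAct.ofConjAct c)⁻¹ * x * ConjAct.ofConjAct c), by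
    obtain ⟨f, one_mem, mul_mem, inv_mem⟩ := f
    refine ⟨by simpa using one_mem, fun x y hx hy => ?_, fun x hx => ?_⟩
    · simpa [mul_assoc] using mul_mem _ _ hx hy
    · simpa [mul_assoc] using inv_mem _ hx⟩

theorem smul_coe (c : ConjAct G) (f : BoolSubgroup G) (x : G) :
    (c • f).1 x = f.1 ((ConjAct.ofConjAct c)⁻¹ * x * ConjAct.ofConjAct c) :=
  rfl

instance : MulAction (ConjAct G) (BoolSubgroup G) where
  one_smul f := by ext x; simp [smul_coe]
  mul_smul c d f := by ext x; simp [smul_coe, mul_assoc]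

end BoolSubgroup

namespace Subgroup

variable {G : Type*} [Group G]

open Classical in
noncomputable def equivBoolSubgroup : Subgroup G ≃ BoolSubgroup G where
  toFun H := ⟨fun x => decide (x ∈ H), by
    simp only [decide_eq_true_eq]
    exact ⟨H.one_mem, fun _ _ => H.mul_mem, fun _ => H.inv_mem⟩⟩
  invFun f :=
    { carrier := {x | f.1 x}
      one_mem' := f.2.1
      mul_mem' := f.2.2.1 _ _
      inv_mem' := f.2.2.2 _ }
  left_inv H := by ext x; simp
  right_inv f := by ext x; simp

@[simp]
theorem equivBoolSubgroup_apply_eq_true (H : Subgroup G) (x : G) :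
    (equivBoolSubgroup H).1 x = true ↔ x ∈ H := by
  simp [equivBoolSubgroup]

theorem equivBoolSubgroup_smul (c : ConjAct G) (H : Subgroup G) :
    equivBoolSubgroup (c • H) = c • equivBoolSubgroup H := by
  ext x
  rw [Bool.eq_iff_iff, BoolSubgroup.smul_coe, equivBoolSubgroup_apply_eq_true,
    equivBoolSubgroup_apply_eq_true, mem_pointwise_smul_iff_inv_smul_mem, ConjAct.smul_def]
  simp [mul_assoc]

theorem normal_iff_isNormal_equivBoolSubgroup (H : Subgroup G) :
    H.Normal ↔ (equivBoolSubgroup H).IsNormal := by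
  simp only [BoolSubgroup.IsNormal, equivBoolSubgroup_apply_eq_true]
  exact ⟨fun h g x hx => h.conj_mem x hx g, fun h => ⟨fun x hx g => h g x hx⟩⟩

theorem eq_of_equivBoolSubgroup_coe_eq {H K : Subgroup G} [DecidablePred (· ∈ K)]
    (h : (equivBoolSubgroup H).1 = fun x => decide (x ∈ K)) : H = K := by
  ext x
  have hx := congrFun h x
  rwa [Bool.eq_iff_iff, equivBoolSubgroup_apply_eq_true, decide_eq_true_iff] at hx

end Subgroup

namespace DihedralGroup

section

variable {n : ℕ}

def dihedralSubgroup (a b : ZMod n) : Subgroup (DihedralGroup n) where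
  carrier := {x | match x with
    | r i => ∃ k, k * b = i
    | sr i => ∃ k, a + k * b = i}
  one_mem' := ⟨0, zero_mul b⟩
  mul_mem' := by
    rintro (i | i) (j | j) ⟨k, rfl⟩ ⟨l, rfl⟩
    · simp only [r_mul_r, Set.mem_ofPred_eq]
      exact ⟨k + l, by ring⟩
    · simp only [r_mul_sr, Set.mem_ofPred_eq]
      exact ⟨l - k, by ring⟩
    · simp only [sr_mul_r, Set.mem_ofPred_eq]
      exact ⟨k + l, by ring⟩
    · simp only [sr_mul_sr, Set.mem_ofPred_eq]
      exact ⟨l - k, by ring⟩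
  inv_mem' := by
    rintro (i | i) ⟨k, rfl⟩
    · simp only [inv_r, Set.mem_ofPred_eq]
      exact ⟨-k, by ring⟩
    · simp only [inv_sr, Set.mem_ofPred_eq]
      exact ⟨k, rfl⟩

variable (a b : ZMod n)

theorem r_mem_dihedralSubgroup (i : ZMod n) : r i ∈ dihedralSubgroup a b ↔ ∃ k, k * b = i :=
  Iff.rfl

theorem sr_mem_dihedralSubgroup (i : ZMod n) :
    sr i ∈ dihedralSubgroup a b ↔ ∃ k, a + k * b = i :=
  Iff.rfl

instance [NeZero n] : DecidablePred (· ∈ dihedralSubgroup a b)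
  | r i => decidable_of_iff _ (r_mem_dihedralSubgroup a b i).symm
  | sr i => decidable_of_iff _ (sr_mem_dihedralSubgroup a b i).symm

theorem closure_sr_sup_zpowers_r :
    Subgroup.closure {sr a} ⊔ Subgroup.zpowers (r b) = dihedralSubgroup a b := by
  have r_mul_eq_zpow (k : ZMod n) : r (k * b) = r b ^ (k.cast : ℤ) := by
    rw [r_zpow, ZMod.intCast_zmod_cast, mul_comm]
  apply le_antisymm
  · refine sup_le ?_ ?_
    · rw [Subgroup.closure_le, Set.singleton_subset_iff]
      exact ⟨0, by rw [zero_mul, add_zero]⟩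
    · rw [Subgroup.zpowers_le]
      exact ⟨1, one_mul b⟩
  · rintro (i | i) ⟨k, rfl⟩
    · rw [r_mul_eq_zpow]
      exact Subgroup.mem_sup_right (Subgroup.zpow_mem_zpowers _ _)
    · rw [← sr_mul_r, r_mul_eq_zpow]
      exact mul_mem (Subgroup.mem_sup_left (Subgroup.subset_closure rfl))
        (Subgroup.mem_sup_right (Subgroup.zpow_mem_zpowers _ _))

end

open MulAction

theorem card_not_isNormal_boolSubgroup :
    Fintype.card {f : BoolSubgroup (DihedralGroup 6) // ¬ f.IsNormal} = 9 := by
  decide +kernel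

theorem exists_eq_dihedralSubgroup_of_not_isNormal :
    ∀ f : BoolSubgroup (DihedralGroup 6), ¬ f.IsNormal →
      ∃ a b : ZMod 6, f.1 = fun x => decide (x ∈ dihedralSubgroup a b) := by
  decide +kernel

theorem card_orbit_of_not_isNormal :
    ∀ f : BoolSubgroup (DihedralGroup 6), ¬ f.IsNormal →
      Fintype.card (orbit (ConjAct (DihedralGroup 6)) f) = 3 := by
  decide +kernel

theorem card_orbitRel_quotient_boolSubgroup :
    Fintype.card (orbitRel.Quotient (ConjAct (DihedralGroup 6)) (BoolSubgroup (DihedralGroup 6)))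
      = 10 := by
  decide +kernel

end DihedralGroup

open MulAction Subgroup DihedralGroup in
/-- The subgroups of `D₁₂ = DihedralGroup 6` fall into exactly 10 conjugacy classes:
every non-normal subgroup is generated by a reflection together with a rotation subgroup
and lies in a conjugacy class (orbit under conjugation) of size 3, there are 9 such
subgroups, and the number of subgroups up to conjugacy is 10. -/
theorem dihedralGroup_six_subgroups_up_to_conjugacy :
    (∀ H : Subgroup (DihedralGroup 6), ¬ H.Normal →
      ((∃ a b : ZMod 6,
          H = Subgroup.closure {DihedralGroup.sr a} ⊔ Subgroup.zpowers (DihedralGroup.r b)) ∧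
        Nat.card (MulAction.orbit (ConjAct (DihedralGroup 6)) H) = 3)) ∧
    Nat.card {H : Subgroup (DihedralGroup 6) // ¬ H.Normal} = 9 ∧
    Nat.card
      (MulAction.orbitRel.Quotient (ConjAct (DihedralGroup 6))
        (Subgroup (DihedralGroup 6))) = 10 := by
  refine ⟨fun H hH => ?_, ?_, ?_⟩
  · rw [normal_iff_isNormal_equivBoolSubgroup] at hH
    obtain ⟨a, b, hab⟩ := exists_eq_dihedralSubgroup_of_not_isNormal _ hH
    refine ⟨⟨a, b, ?_⟩, ?_⟩
    · rw [closure_sr_sup_zpowers_r]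
      exact eq_of_equivBoolSubgroup_coe_eq hab
    · rw [natCard_orbit_congr _ equivBoolSubgroup_smul, Nat.card_eq_fintype_card]
      exact card_orbit_of_not_isNormal _ hH
  · rw [Nat.card_congr (equivBoolSubgroup.subtypeEquiv (q := fun f => ¬ f.IsNormal) fun H =>
      (normal_iff_isNormal_equivBoolSubgroup H).not), Nat.card_eq_fintype_card]
    exact card_not_isNormal_boolSubgroup
  · rw [Nat.card_congr (orbitRelQuotientCongr _ equivBoolSubgroup_smul),
      Nat.card_eq_fintype_card]
    exact card_orbitRel_quotient_boolSubgroup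
end

section
/- Let G = D₁₂ be the dihedral group of order 12 with generators r (of order 6) and f (a reflection), let μ denote the Möbius function of the lattice of subgroups of G, and let ϕ : Subgroup G → ℚ be any function that is constant on conjugacy classes of subgroups (ϕ(H) = ϕ(gHg⁻¹) for all g ∈ G). Then Σ_{H ≤ G} (1/[G:H]) · Σ_{K : H ≤ K ≤ G} μ(H,K) · ϕ(K) = (ϕ(⟨e⟩) + 3ϕ(⟨f⟩) + 3ϕ(⟨fr⟩) + ϕ(⟨r³⟩) + 2ϕ(⟨r²⟩) + 2ϕ(⟨r⟩)) / 12. -/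
open Pointwise Finset
open scoped Classical

noncomputable instance : Fintype (Subgroup (DihedralGroup 6)) := Fintype.ofFinite _

noncomputable instance : LocallyFiniteOrder (Subgroup (DihedralGroup 6)) :=
  Fintype.toLocallyFiniteOrder

/-!
Since `|H| = ∑_{K ≤ H} #{g | ⟨g⟩ = K}`, Möbius inversion gives
`∑_{H ≤ K} μ(H, K) |H| = #{g | ⟨g⟩ = K}`. With `[G : H]⁻¹ = |H| / |G|` and the two sums
swapped, the left-hand side becomes `|G|⁻¹ ∑_{g ∈ G} ϕ ⟨g⟩`, in any finite group. In `D₁₂` the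
cyclic subgroups `⟨r^i⟩` and `⟨r^{-i}⟩` coincide, and conjugation by `r^k` sends the reflection
`s r^i` to `s r^{i - 2k}`, so the reflections fall into the two classes of `f` and `fr`.
-/

namespace Subgroup

variable {G : Type*} [Group G]

theorem toConjAct_smul_zpowers (g a : G) :
    ConjAct.toConjAct g • zpowers a = zpowers (g * a * g⁻¹) :=
  MonoidHom.map_zpowers (MulAut.conj g).toMonoidHom a

theorem inv_index_eq_card_div_card [Finite G] {𝕜 : Type*} [Field 𝕜] [CharZero 𝕜]
    (H : Subgroup G) : (H.index : 𝕜)⁻¹ = Nat.card H / Nat.card G := by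
  rw [← H.card_mul_index, Nat.cast_mul, ← div_div, div_self (Nat.cast_ne_zero.mpr Nat.card_pos.ne'),
    one_div]

section Finite

variable [Fintype G] [LocallyFiniteOrder (Subgroup G)]

theorem card_eq_sum_card_zpowers_eq (H : Subgroup G) :
    Nat.card H = ∑ K ∈ Iic H, #{g | zpowers g = K} := by
  rw [Nat.card_eq_fintype_card, Fintype.card_subtype, card_eq_sum_card_fiberwise (f := zpowers)
    (t := Iic H) (fun g hg => by simpa using hg)]
  refine sum_congr rfl fun K hK => ?_
  rw [filter_filter]
  exact congrArg card <| filter_congr fun g _ =>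
    and_iff_right_of_imp fun h => mem_Iic.mp hK (h ▸ mem_zpowers g)

variable {𝕜 : Type*} [Field 𝕜] [CharZero 𝕜]

theorem card_zpowers_eq_eq_sum_mu (K : Subgroup G) :
    (#{g | zpowers g = K} : 𝕜) = ∑ H ∈ Iic K, IncidenceAlgebra.mu 𝕜 H K * Nat.card H :=
  IncidenceAlgebra.moebius_inversion_bot (fun K => (#{g | zpowers g = K} : 𝕜))
    (fun H => (Nat.card H : 𝕜))
    (fun H => by exact_mod_cast card_eq_sum_card_zpowers_eq H) K

theorem sum_inv_index_mul_sum_mu_mul [Fintype (Subgroup G)] (ϕ : Subgroup G → 𝕜) :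
    ∑ H : Subgroup G, (H.index : 𝕜)⁻¹ * ∑ K ∈ Icc H ⊤, IncidenceAlgebra.mu 𝕜 H K * ϕ K =
      (∑ g : G, ϕ (zpowers g)) / Nat.card G := by
  calc
    _ = ∑ H : Subgroup G, ∑ K ∈ Ici H,
          IncidenceAlgebra.mu 𝕜 H K * Nat.card H * ϕ K / Nat.card G := by
      refine sum_congr rfl fun H _ => ?_
      rw [inv_index_eq_card_div_card, ← Ici_eq_Icc, mul_sum]
      exact sum_congr rfl fun K _ => by ring
    _ = ∑ K : Subgroup G, ∑ H ∈ Iic K,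
          IncidenceAlgebra.mu 𝕜 H K * Nat.card H * ϕ K / Nat.card G :=
      sum_comm' fun H K => by simp
    _ = ∑ K : Subgroup G, #{g | zpowers g = K} * ϕ K / Nat.card G := by
      simp_rw [card_zpowers_eq_eq_sum_mu, sum_mul, sum_div]
    _ = (∑ g : G, ϕ (zpowers g)) / Nat.card G := by
      rw [← sum_div, ← sum_fiberwise' univ zpowers ϕ]
      simp only [sum_const, nsmul_eq_mul]

end Finite

end Subgroup

namespace DihedralGroup

open Subgroup

variable {n : ℕ}

theorem r_mul_sr_mul_r_inv (k i : ZMod n) : r k * sr i * (r k)⁻¹ = sr (i - 2 * k) := by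
  rw [r_mul_sr, inv_r, sr_mul_r]
  ring_nf

theorem sum_univ [NeZero n] {M : Type*} [AddCommMonoid M] (f : DihedralGroup n → M) :
    ∑ g, f g = ∑ i, f (r i) + ∑ i, f (sr i) := by
  rw [← Fintype.sum_equiv equivSum.symm _ _ (fun _ => rfl), Fintype.sum_sum_type]
  rfl

theorem zpowers_r_neg (i : ZMod n) : zpowers (r (-i)) = zpowers (r i) := by
  rw [← inv_r, zpowers_inv]

theorem apply_zpowers_sr_eq_of_conj_invariant {α : Type*} (ϕ : Subgroup (DihedralGroup n) → α)
    (hconj : ∀ (g : ConjAct (DihedralGroup n)) (H : Subgroup (DihedralGroup n)),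
      ϕ (g • H) = ϕ H)
    (i j k : ZMod n) (h : j = i - 2 * k) :
    ϕ (zpowers (sr j)) = ϕ (zpowers (sr i)) := by
  rw [h, ← r_mul_sr_mul_r_inv, ← toConjAct_smul_zpowers, hconj]

theorem sum_apply_zpowers_dihedralGroup_six {R : Type*} [CommSemiring R]
    (ϕ : Subgroup (DihedralGroup 6) → R)
    (hconj : ∀ (g : ConjAct (DihedralGroup 6)) (H : Subgroup (DihedralGroup 6)),
      ϕ (g • H) = ϕ H) :
    ∑ g, ϕ (zpowers g) = ϕ ⊥ + 3 * ϕ (zpowers (sr 0)) + 3 * ϕ (zpowers (sr 1))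
      + ϕ (zpowers (r 3)) + 2 * ϕ (zpowers (r 2)) + 2 * ϕ (zpowers (r 1)) := by
  have sum_zmod_six (f : ZMod 6 → R) : ∑ i, f i = f 0 + f 1 + f 2 + f 3 + f 4 + f 5 :=
    Fin.sum_univ_six f
  have hr0 : zpowers (r 0 : DihedralGroup 6) = ⊥ := by rw [← one_def, zpowers_one_eq_bot]
  have hr4 : zpowers (r 4 : DihedralGroup 6) = zpowers (r 2) := zpowers_r_neg 2
  have hr5 : zpowers (r 5 : DihedralGroup 6) = zpowers (r 1) := zpowers_r_neg 1
  have hsr := apply_zpowers_sr_eq_of_conj_invariant ϕ hconj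
  rw [sum_univ, sum_zmod_six, sum_zmod_six, hr0, hr4, hr5, hsr 0 2 2 (by decide),
    hsr 0 4 1 (by decide), hsr 1 3 2 (by decide), hsr 1 5 1 (by decide)]
  ring

end DihedralGroup

/-- Let `G = D₁₂` with generators `r` (of order 6) and `f = sr 0` (a reflection), let `μ` be the
Möbius function of the subgroup lattice of `G`, and let `ϕ : Subgroup G → ℚ` be constant on
conjugacy classes of subgroups.  Then
`Σ_{H ≤ G} (1/[G:H]) Σ_{K ≥ H} μ(H,K) ϕ(K)
  = (ϕ⟨e⟩ + 3ϕ⟨f⟩ + 3ϕ⟨fr⟩ + ϕ⟨r³⟩ + 2ϕ⟨r²⟩ + 2ϕ⟨r⟩)/12`. -/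
theorem dihedralGroup_six_moebius_weights
    (ϕ : Subgroup (DihedralGroup 6) → ℚ)
    (hconj : ∀ (g : ConjAct (DihedralGroup 6)) (H : Subgroup (DihedralGroup 6)),
      ϕ (g • H) = ϕ H) :
    ∑ H : Subgroup (DihedralGroup 6), (H.index : ℚ)⁻¹ *
        ∑ K ∈ Finset.Icc H ⊤, IncidenceAlgebra.mu ℚ H K * ϕ K =
      (ϕ ⊥ + 3 * ϕ (Subgroup.zpowers (DihedralGroup.sr 0))
        + 3 * ϕ (Subgroup.zpowers (DihedralGroup.sr 1))
        + ϕ (Subgroup.zpowers (DihedralGroup.r 3))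
        + 2 * ϕ (Subgroup.zpowers (DihedralGroup.r 2))
        + 2 * ϕ (Subgroup.zpowers (DihedralGroup.r 1))) / 12 := by
  rw [Subgroup.sum_inv_index_mul_sum_mu_mul,
    DihedralGroup.sum_apply_zpowers_dihedralGroup_six ϕ hconj, DihedralGroup.nat_card]
  norm_num
end
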